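/- Let H be a finite simple graph and H_⋆ the graph with V(H_⋆) = V(H) ⊔ {ψ} and E(H_⋆) = E(H) ∪ { {ψ,v} : v ∈ V(H) }, so that E(H_⋆) is identified with E(H) ⊔ V(H) (the new edge {ψ,v} corresponding to v). Let C⁰_{H_⋆} = { r ∈ C_{H_⋆} : r_e = 0 for all e ∈ E(H) }, and let STAB(H) ⊆ [0,1]^{V(H)} be the convex hull of the characteristic vectors χ_S of the stable sets S of H. Then, under the identification ℝ^{E(H_⋆)} ≅ ℝ^{E(H)} × ℝ^{V(H)}, one has C⁰_{H_⋆} = {0_{E(H)}} × STAB(H); in particular C⁰_{H_⋆} and STAB(H) are isomorphic polytopes. -/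

import Mathlib

open SimpleGraph
open scoped Classical

variable {V : Type*}

/-- The element of `G.edgeSet` corresponding to an adjacent pair of vertices. -/
def edgeMk (G : SimpleGraph V) {v w : V} (h : G.Adj v w) : G.edgeSet :=
  ⟨s(v, w), (SimpleGraph.mem_edgeSet G).mpr h⟩

/-- `r` is a realizable edge `{0,1}`-labelling of `G`, viewed as a real vector:
it is the equality labelling of some vertex labelling. -/
def RealizablePoint (G : SimpleGraph V) (r : G.edgeSet → ℝ) : Prop :=
  ∃ (Λ : Type) (lam : V → Λ), ∀ v w (h : G.Adj v w),
    r (edgeMk G h) = if lam v = lam w then 1 else 0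

/-- The classical polytope `C_G`: the convex hull of the realizable edge `{0,1}`-labellings. -/
def classicalPolytope (G : SimpleGraph V) : Set (G.edgeSet → ℝ) :=
  convexHull ℝ {r | RealizablePoint G r}

/-- The graph `H_⋆` obtained from `H` by adjoining a new vertex `ψ` (modelled by `none`
in `Option V`) together with edges `{ψ, v}` for every `v ∈ V(H)`. -/
def starGraph (H : SimpleGraph V) : SimpleGraph (Option V) where
  Adj x y := x ≠ y ∧ ∀ v w : V, x = some v → y = some w → H.Adj v w
  symm := ⟨fun x y ⟨hne, h⟩ => ⟨hne.symm, fun v w hy hx => (h w v hx hy).symm⟩⟩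
  loopless := ⟨fun x h => h.1 rfl⟩

theorem starGraph_adj_some (H : SimpleGraph V) {v w : V} (h : H.Adj v w) :
    (_root_.starGraph H).Adj (some v) (some w) :=
  ⟨by simpa using h.ne, fun a b ha hb => by
    cases Option.some.inj ha; cases Option.some.inj hb; exact h⟩

theorem starGraph_adj_none (H : SimpleGraph V) (v : V) :
    (_root_.starGraph H).Adj none (some v) :=
  ⟨fun h => (by cases h), fun a b ha _ => (by cases ha)⟩

/-- The stable set polytope `STAB(H) ⊆ [0,1]^{V(H)}`: the convex hull of the
characteristic vectors of the stable (independent) sets of `H`. -/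
noncomputable def stabPolytope (H : SimpleGraph V) : Set (V → ℝ) :=
  convexHull ℝ {x | ∃ S : Set V, (∀ v ∈ S, ∀ w ∈ S, ¬ H.Adj v w) ∧
    ∀ v, x v = if v ∈ S then 1 else 0}

/-!
Realizable points are nonnegative, so the coordinates indexed by `E(H)` cut a face out of
`C_{H_⋆}`: `C⁰_{H_⋆}` is the convex hull of the realizable points vanishing on `E(H)`. Such a point
comes from a labelling in which no edge of `H` is monochromatic, so its handle part `v ↦ r_{ψ v}`
is the indicator of the stable set of vertices labelled like `ψ`, and every stable set arises this
way. As points vanishing on `E(H)` are determined by their handle part, the linear projection onto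
it maps `C⁰_{H_⋆}` bijectively onto the convex hull of these indicators, `STAB(H)`.
-/

open Finset in
theorem mem_convexHull_setOf_forall_eq_zero {𝕜 E ι : Type*} [Field 𝕜] [LinearOrder 𝕜]
    [IsStrictOrderedRing 𝕜] [AddCommGroup E] [Module 𝕜 E] {s : Set E} {x : E}
    (f : ι → E →ₗ[𝕜] 𝕜) (hs : ∀ y ∈ s, ∀ i, 0 ≤ f i y) (hx : x ∈ convexHull 𝕜 s)
    (hfx : ∀ i, f i x = 0) : x ∈ convexHull 𝕜 {y ∈ s | ∀ i, f i y = 0} := by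
  obtain ⟨κ, _, w, a, hw₀, hw₁, ha, rfl⟩ := mem_convexHull_iff_exists_fintype.1 hx
  have hvanish (j : κ) (hj : w j ≠ 0) (i : ι) : f i (a j) = 0 := by
    have hterms : ∀ k ∈ univ, 0 ≤ w k * f i (a k) :=
      fun k _ => mul_nonneg (hw₀ k) (hs _ (ha k) i)
    have hsum : ∑ k, w k * f i (a k) = 0 := by simpa using hfx i
    exact (mul_eq_zero.1 ((sum_eq_zero_iff_of_nonneg hterms).1 hsum j (mem_univ j))).resolve_left
      hj
  rw [← Fintype.sum_subset (s := {j | w j ≠ 0})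
    fun j hj ↦ mem_filter.2 ⟨mem_univ _, left_ne_zero_of_smul hj⟩]
  exact (convex_convexHull ..).sum_mem (fun j _ ↦ hw₀ j) (by rwa [sum_filter_ne_zero])
    fun j hj ↦ subset_convexHull _ _ ⟨ha j, hvanish j (mem_filter.1 hj).2⟩

section EdgeLabelling

variable {Λ : Type*} (G : SimpleGraph V)

theorem exists_edgeMk_eq (e : G.edgeSet) : ∃ (v w : V) (h : G.Adj v w), edgeMk G h = e := by
  obtain ⟨e, he⟩ := e
  induction e using Sym2.ind with
  | _ v w => exact ⟨v, w, he, rfl⟩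

theorem edgeMk_symm {v w : V} (h : G.Adj v w) : edgeMk G h.symm = edgeMk G h :=
  Subtype.ext Sym2.eq_swap

theorem RealizablePoint.nonneg {G : SimpleGraph V} {r : G.edgeSet → ℝ}
    (hr : RealizablePoint G r) (e : G.edgeSet) : 0 ≤ r e := by
  obtain ⟨Λ, lam, hlam⟩ := hr
  obtain ⟨v, w, h, rfl⟩ := exists_edgeMk_eq G e
  rw [hlam v w h]
  split_ifs <;> norm_num

noncomputable def equalityLabelling (lam : V → Λ) : G.edgeSet → ℝ :=
  fun e => Sym2.lift
    ⟨fun v w => if lam v = lam w then 1 else 0, fun v w => by simp only [eq_comm]⟩ e.1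

theorem equalityLabelling_edgeMk (lam : V → Λ) {v w : V} (h : G.Adj v w) :
    equalityLabelling G lam (edgeMk G h) = if lam v = lam w then 1 else 0 :=
  rfl

/-- `RealizablePoint` asks for labels in `Type`; over finitely many vertices the labels used
can be moved into some `Fin n`. -/
theorem realizablePoint_equalityLabelling [Finite V] (lam : V → Λ) :
    RealizablePoint G (equalityLabelling G lam) := by
  obtain ⟨n, ⟨e⟩⟩ := Finite.exists_equiv_fin (Set.range lam)
  refine ⟨Fin n, fun v => e ⟨lam v, v, rfl⟩, fun v w h => ?_⟩
  simp only [equalityLabelling_edgeMk, e.apply_eq_iff_eq, Subtype.ext_iff]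

end EdgeLabelling

section StarGraph

variable (H : SimpleGraph V)

theorem starGraph_edge_cases (e : (_root_.starGraph H).edgeSet) :
    (∃ (v w : V) (h : H.Adj v w), e = edgeMk _ (starGraph_adj_some H h)) ∨
      ∃ v, e = edgeMk _ (starGraph_adj_none H v) := by
  obtain ⟨a, b, hab, rfl⟩ := exists_edgeMk_eq _ e
  match a, b, hab with
  | none, none, hab => exact absurd rfl hab.1
  | none, some v, _ => exact .inr ⟨v, rfl⟩
  | some v, none, hab => exact .inr ⟨v, (edgeMk_symm _ hab).symm.trans rfl⟩
  | some v, some w, hab => exact .inl ⟨v, w, hab.2 v w rfl rfl, rfl⟩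

def vanishingOnEdges : Set ((_root_.starGraph H).edgeSet → ℝ) :=
  {r | ∀ v w (h : H.Adj v w), r (edgeMk _ (starGraph_adj_some H h)) = 0}

theorem convex_vanishingOnEdges : Convex ℝ (vanishingOnEdges H) := by
  intro x hx y hy a b _ _ _ v w h
  simp [hx v w h, hy v w h]

noncomputable def handleMap : ((_root_.starGraph H).edgeSet → ℝ) →ₗ[ℝ] (V → ℝ) :=
  LinearMap.funLeft ℝ ℝ fun v => edgeMk _ (starGraph_adj_none H v)

theorem injOn_handleMap : Set.InjOn (handleMap H) (vanishingOnEdges H) := by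
  intro p hp q hq hpq
  funext e
  rcases starGraph_edge_cases H e with ⟨v, w, h, rfl⟩ | ⟨v, rfl⟩
  · rw [hp v w h, hq v w h]
  · exact congrFun hpq v

def stableIndicators : Set (V → ℝ) :=
  {x | ∃ S : Set V, (∀ v ∈ S, ∀ w ∈ S, ¬ H.Adj v w) ∧ ∀ v, x v = if v ∈ S then 1 else 0}

def realizableVanishingOnEdges : Set ((_root_.starGraph H).edgeSet → ℝ) :=
  {r | RealizablePoint _ r} ∩ vanishingOnEdges H

theorem convexHull_realizableVanishingOnEdges_subset :
    convexHull ℝ (realizableVanishingOnEdges H) ⊆ vanishingOnEdges H :=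
  convexHull_min Set.inter_subset_right (convex_vanishingOnEdges H)

theorem handleMap_mem_stableIndicators {r : (_root_.starGraph H).edgeSet → ℝ}
    (hr : RealizablePoint _ r) (hr0 : r ∈ vanishingOnEdges H) :
    handleMap H r ∈ stableIndicators H := by
  obtain ⟨Λ, lam, hlam⟩ := hr
  refine ⟨{v | lam (some v) = lam none}, fun v hv w hw h => ?_, fun v => ?_⟩
  · have := hlam _ _ (starGraph_adj_some H h)
    rw [hr0 v w h, if_pos (hv.trans hw.symm)] at this
    exact zero_ne_one this
  · exact (hlam _ _ (starGraph_adj_none H v)).trans (by simp only [eq_comm]; rfl)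

theorem mem_image_handleMap_of_mem_stableIndicators {x : V → ℝ} [Finite V]
    (hx : x ∈ stableIndicators H) :
    x ∈ handleMap H '' realizableVanishingOnEdges H := by
  obtain ⟨S, hS, hxS⟩ := hx
  -- label `ψ` and the vertices of `S` alike, and every other vertex by itself
  let lam : Option V → Option V := fun a => a.bind fun v => if v ∈ S then none else some v
  refine ⟨equalityLabelling _ lam,
    ⟨realizablePoint_equalityLabelling _ lam, fun v w h => ?_⟩, ?_⟩
  · have hne : lam (some v) ≠ lam (some w) := by
      by_cases hv : v ∈ S <;> by_cases hw : w ∈ S <;> simp [lam, hv, hw, h.ne]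
      exact hS v hv w hw h
    rw [equalityLabelling_edgeMk, if_neg hne]
  · funext v
    rw [hxS v]
    by_cases hv : v ∈ S <;> simp [handleMap, equalityLabelling_edgeMk, lam, hv]

theorem image_handleMap_realizableVanishingOnEdges [Finite V] :
    handleMap H '' realizableVanishingOnEdges H = stableIndicators H :=
  Set.Subset.antisymm
    (Set.image_subset_iff.2 fun _ hr => handleMap_mem_stableIndicators H hr.1 hr.2)
    fun _ => mem_image_handleMap_of_mem_stableIndicators H

theorem classicalPolytope_inter_vanishingOnEdges :
    classicalPolytope (_root_.starGraph H) ∩ vanishingOnEdges H =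
      convexHull ℝ (realizableVanishingOnEdges H) := by
  refine Set.Subset.antisymm (fun r ⟨hr, hr0⟩ => ?_) (Set.subset_inter
    (convexHull_mono Set.inter_subset_left) (convexHull_realizableVanishingOnEdges_subset H))
  refine convexHull_mono ?_ (mem_convexHull_setOf_forall_eq_zero
    (fun e : {p : V × V // H.Adj p.1 p.2} => LinearMap.proj (edgeMk _ (starGraph_adj_some H e.2)))
    (fun _ hp _ => hp.nonneg _) hr fun e => hr0 _ _ e.2)
  exact fun _ ⟨hp, hp0⟩ => ⟨hp, fun v w h => hp0 ⟨(v, w), h⟩⟩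

theorem stabPolytope_eq_image_handleMap [Finite V] :
    stabPolytope H = handleMap H '' convexHull ℝ (realizableVanishingOnEdges H) := by
  rw [LinearMap.image_convexHull, image_handleMap_realizableVanishingOnEdges]
  rfl

end StarGraph

/-- Under the identification `ℝ^{E(H_⋆)} ≅ ℝ^{E(H)} × ℝ^{V(H)}` (the new edge `{ψ,v}`
corresponding to `v`), the constrained polytope `C⁰_{H_⋆}` equals `{0_{E(H)}} × STAB(H)`:
a point `r` of `ℝ^{E(H_⋆)}` vanishing on `E(H)` lies in `C_{H_⋆}` iff its handle part
`v ↦ r_{ψ v}` lies in `STAB(H)`. -/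
theorem stmt12 [Fintype V] (H : SimpleGraph V) (r : (_root_.starGraph H).edgeSet → ℝ) :
    (r ∈ classicalPolytope (_root_.starGraph H) ∧
      ∀ v w (h : H.Adj v w), r (edgeMk (_root_.starGraph H) (starGraph_adj_some H h)) = 0) ↔
    ((∀ v w (h : H.Adj v w), r (edgeMk (_root_.starGraph H) (starGraph_adj_some H h)) = 0) ∧
      (fun v : V => r (edgeMk (_root_.starGraph H) (starGraph_adj_none H v))) ∈ stabPolytope H) := by
  change r ∈ classicalPolytope _ ∩ vanishingOnEdges H ↔
    r ∈ vanishingOnEdges H ∧ handleMap H r ∈ stabPolytope H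
  rw [classicalPolytope_inter_vanishingOnEdges, stabPolytope_eq_image_handleMap]
  have hsub := convexHull_realizableVanishingOnEdges_subset H
  exact ⟨fun hr => ⟨hsub hr, Set.mem_image_of_mem _ hr⟩,
    fun ⟨hr0, hr⟩ => ((injOn_handleMap H).mem_image_iff hsub hr0).1 hr⟩
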